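/- arXiv:math/0411371 — 2 statements merged into one kernel-verified Lean document; each statement's English description precedes it below -/
import Mathlib

section
/- Let H be a Hilbert space and S an isometry on H. Then there exist a Hilbert space Ĥ containing H as a closed subspace (via an isometric embedding) and a unitary operator Ŝ on Ĥ such that Ŝ restricted to H equals S, and the union ⋃_{n≥0} Ŝ⁻ⁿ(H) is dense in Ĥ. Moreover the pair (Ĥ, Ŝ) is unique up to an intertwining unitary isomorphism fixing H. -/
/-!
Let the `n`-th copy of `H` in the direct limit of `H →S H →S H → ⋯` stand for `Ŝ⁻ⁿ H`. Since `S`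
is isometric, the inner products of the copies glue to an inner product on the limit, and `S`,
acting on every copy, becomes invertible there: its inverse moves each copy one step further. The
completion of the limit with this shift is a minimal unitary dilation. Conversely, every minimal
dilation `D` receives an isometry from the direct limit, sending `v` in the `n`-th copy to
`Ŝ⁻ⁿ J v`; minimality says exactly that its range is dense, so for two dilations the identity of
the direct limit extends to the intertwining unitary.
-/

/-- A unitary dilation of an isometry `S` on a Hilbert space `H`: a Hilbert space `Ĥ`
containing `H` (via the isometric embedding `J`), and a unitary `Ŝ` on `Ĥ` restricting to `S`
on `H`, such that `⋃_{n ≥ 0} Ŝ⁻ⁿ(H)` is dense in `Ĥ`. -/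
structure UnitaryDilation (H : Type) [NormedAddCommGroup H] [InnerProductSpace ℂ H]
    [CompleteSpace H] (S : H →ₗᵢ[ℂ] H) where
  carrier : Type
  [grp : NormedAddCommGroup carrier]
  [ips : InnerProductSpace ℂ carrier]
  [cpl : CompleteSpace carrier]
  J : H →ₗᵢ[ℂ] carrier
  Shat : carrier ≃ₗᵢ[ℂ] carrier
  restricts : ∀ v : H, Shat (J v) = J (S v)
  minimal : Dense (⋃ n : ℕ, (⇑Shat.symm)^[n] '' Set.range J)

attribute [instance] UnitaryDilation.grp UnitaryDilation.ips UnitaryDilation.cpl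

noncomputable section

namespace Module.End

variable {R M : Type*} [Semiring R] [AddCommMonoid M] [Module R M] (f : Module.End R M)

instance directedSystem_pow : DirectedSystem (fun _ : ℕ ↦ M) (fun i j _ ↦ ⇑(f ^ (j - i))) where
  map_self i x := by simp
  map_map {k j i} hij hjk x := by
    rw [← Module.End.mul_apply, ← pow_add]
    congr 2
    omega

-- `of f n v` stands for `f⁻ⁿ v`.
abbrev IterateLimit : Type _ := DirectLimit (fun _ : ℕ ↦ M) (fun i j _ ↦ f ^ (j - i))

namespace IterateLimit

def of (n : ℕ) : M →ₗ[R] IterateLimit f := DirectLimit.of R ℕ (fun _ ↦ M) _ n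

variable {f}

theorem of_pow_apply (n k : ℕ) (v : M) : of f (n + k) ((f ^ k) v) = of f n v := by
  have h := DirectLimit.of_f (G := fun _ : ℕ ↦ M) (f := fun i j _ ↦ f ^ (j - i))
    (hij := Nat.le_add_right n k) (x := v)
  rwa [Nat.add_sub_cancel_left] at h

theorem of_succ_apply (n : ℕ) (v : M) : of f (n + 1) (f v) = of f n v := by
  simpa using of_pow_apply n 1 v

theorem of_injective (hf : Function.Injective f) (n : ℕ) : Function.Injective (of f n) := by
  intro v w h
  obtain ⟨j, hnj, hj⟩ := DirectLimit.exists_eq_of_of_eq h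
  exact (Module.End.coe_pow f (j - n) ▸ hf.iterate (j - n)) hj

theorem exists_of (x : IterateLimit f) : ∃ n v, of f n v = x := DirectLimit.exists_of x

theorem exists_of₂ (x y : IterateLimit f) : ∃ n v w, of f n v = x ∧ of f n w = y :=
  DirectLimit.exists_of₂ x y

theorem exists_of₃ (x y z : IterateLimit f) :
    ∃ n u v w, of f n u = x ∧ of f n v = y ∧ of f n w = z := by
  obtain ⟨i, u, v, rfl, rfl⟩ := exists_of₂ x y
  obtain ⟨j, w, rfl⟩ := exists_of z
  refine ⟨i + j, (f ^ j) u, (f ^ j) v, (f ^ i) w, of_pow_apply i j u, of_pow_apply i j v, ?_⟩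
  rw [add_comm, of_pow_apply]

@[elab_as_elim]
protected theorem induction_on {C : IterateLimit f → Prop} (x : IterateLimit f)
    (of : ∀ n v, C (of f n v)) : C x :=
  DirectLimit.induction_on x of

variable {P : Type*} [AddCommMonoid P] [Module R P]

def lift (g : ℕ → M →ₗ[R] P) (hg : ∀ n v, g (n + 1) (f v) = g n v) : IterateLimit f →ₗ[R] P :=
  DirectLimit.lift R ℕ _ _ g fun i j hij v ↦ by
    obtain ⟨k, rfl⟩ := Nat.exists_eq_add_of_le hij
    rw [Nat.add_sub_cancel_left]
    induction k with
    | zero => simp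
    | succ k ih => rw [pow_succ', Module.End.mul_apply, ← add_assoc, hg, ih (by omega)]

theorem lift_of (g : ℕ → M →ₗ[R] P) (hg : ∀ n v, g (n + 1) (f v) = g n v) (n : ℕ) (v : M) :
    lift g hg (of f n v) = g n v :=
  DirectLimit.lift_of _ _ _

variable (f)

def shift : IterateLimit f ≃ₗ[R] IterateLimit f :=
  .ofLinearMap (lift (fun n ↦ of f n ∘ₗ f) fun n v ↦ of_succ_apply n (f v))
    (lift (fun n ↦ of f (n + 1)) fun n v ↦ of_succ_apply (n + 1) v)
    (LinearMap.ext fun x ↦ x.induction_on fun n v ↦ by simp [lift_of, of_succ_apply])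
    (LinearMap.ext fun x ↦ x.induction_on fun n v ↦ by simp [lift_of, of_succ_apply])

theorem shift_of (n : ℕ) (v : M) : shift f (of f n v) = of f n (f v) :=
  lift_of _ (fun n v ↦ of_succ_apply n (f v)) n v

theorem shift_symm_of (n : ℕ) (v : M) : (shift f).symm (of f n v) = of f (n + 1) v :=
  lift_of _ (fun n v ↦ of_succ_apply (n + 1) v) n v

theorem shift_symm_iterate_of (k n : ℕ) (v : M) :
    (shift f).symm^[k] (of f n v) = of f (n + k) v := by
  induction k with
  | zero => rfl
  | succ k ih => rw [Function.iterate_succ_apply', ih, shift_symm_of, add_assoc]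

end IterateLimit

end Module.End

theorem LinearIsometry.toLinearMap_pow_apply {𝕜 E : Type*} [Semiring 𝕜] [SeminormedAddCommGroup E]
    [Module 𝕜 E] (S : E →ₗᵢ[𝕜] E) (k : ℕ) (v : E) : (S.toLinearMap ^ k) v = (S ^ k) v := by
  rw [Module.End.coe_pow, LinearIsometry.coe_pow, LinearIsometry.coe_toLinearMap]

namespace LinearIsometryEquiv

variable {R E : Type*} [Semiring R] [SeminormedAddCommGroup E] [Module R E]

theorem coe_pow (e : E ≃ₗᵢ[R] E) (n : ℕ) : ⇑(e ^ n) = e^[n] :=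
  hom_coe_pow _ rfl (fun _ _ ↦ rfl) _ _

end LinearIsometryEquiv

namespace Module.End.IterateLimit

open LinearIsometry UniformSpace

variable {𝕜 E : Type*} [RCLike 𝕜] [NormedAddCommGroup E] [InnerProductSpace 𝕜 E]
  {S : E →ₗᵢ[𝕜] E}

theorem inner_eq_of_of_eq {n m : ℕ} {v w v' w' : E} (hv : of S.toLinearMap n v = of _ m v')
    (hw : of S.toLinearMap n w = of _ m w') : inner 𝕜 v w = inner 𝕜 v' w' := by
  have level (u u' : E) (hu : of S.toLinearMap n u = of _ m u') : (S ^ m) u = (S ^ n) u' := by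
    apply of_injective S.injective (n + m)
    rw [← toLinearMap_pow_apply, ← toLinearMap_pow_apply, of_pow_apply, add_comm, of_pow_apply, hu]
  rw [← (S ^ m).inner_map_map, level v v' hv, level w w' hw, (S ^ n).inner_map_map]

-- The inner product of representatives at a common level, independent of the choice by
-- `inner_eq_of_of_eq`.
variable (S) in
def preInner (x y : IterateLimit S.toLinearMap) : 𝕜 :=
  inner 𝕜 (exists_of₂ x y).choose_spec.choose (exists_of₂ x y).choose_spec.choose_spec.choose

theorem preInner_of (n : ℕ) (v w : E) :
    preInner S (of _ n v) (of _ n w) = inner 𝕜 v w :=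
  have ⟨hv, hw⟩ :=
    (exists_of₂ (of S.toLinearMap n v) (of _ n w)).choose_spec.choose_spec.choose_spec
  inner_eq_of_of_eq hv hw

variable (S) in
abbrev innerCore : InnerProductSpace.Core 𝕜 (IterateLimit S.toLinearMap) where
  inner := preInner S
  conj_inner_symm x y := by
    obtain ⟨n, v, w, rfl, rfl⟩ := exists_of₂ x y
    rw [preInner_of, preInner_of, inner_conj_symm]
  re_inner_nonneg x := x.induction_on fun n v ↦ by
    rw [preInner_of]
    exact inner_self_nonneg
  add_left x y z := by
    obtain ⟨n, u, v, w, rfl, rfl, rfl⟩ := exists_of₃ x y z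
    rw [← map_add, preInner_of, preInner_of, preInner_of, inner_add_left]
  smul_left x y r := by
    obtain ⟨n, v, w, rfl, rfl⟩ := exists_of₂ x y
    rw [← map_smul, preInner_of, preInner_of, inner_smul_left]
  definite x := x.induction_on fun n v h ↦ by
    rw [preInner_of, inner_self_eq_zero] at h
    rw [h, map_zero]

instance : NormedAddCommGroup (IterateLimit S.toLinearMap) := (innerCore S).toNormedAddCommGroup

instance : InnerProductSpace 𝕜 (IterateLimit S.toLinearMap) := .ofCore (innerCore S).toCore

theorem inner_of (n : ℕ) (v w : E) : inner 𝕜 (of S.toLinearMap n v) (of _ n w) = inner 𝕜 v w :=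
  preInner_of n v w

theorem norm_of (n : ℕ) (v : E) : ‖of S.toLinearMap n v‖ = ‖v‖ := by
  rw [@norm_eq_sqrt_re_inner 𝕜, @norm_eq_sqrt_re_inner 𝕜 E, inner_of]

theorem norm_shift (x : IterateLimit S.toLinearMap) : ‖shift _ x‖ = ‖x‖ :=
  x.induction_on fun n v ↦ by rw [shift_of, norm_of, norm_of, coe_toLinearMap, S.norm_map]

variable (S) in
def ofₗᵢ (n : ℕ) : E →ₗᵢ[𝕜] IterateLimit S.toLinearMap := ⟨of _ n, norm_of n⟩

variable {F : Type*} [SeminormedAddCommGroup F] [Module 𝕜 F]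

def liftₗᵢ (g : ℕ → E →ₗᵢ[𝕜] F) (hg : ∀ n v, g (n + 1) (S v) = g n v) :
    IterateLimit S.toLinearMap →ₗᵢ[𝕜] F where
  toLinearMap := lift (fun n ↦ (g n).toLinearMap) hg
  norm_map' x := x.induction_on fun n v ↦ by
    rw [lift_of, coe_toLinearMap, (g n).norm_map, norm_of]

theorem liftₗᵢ_of (g : ℕ → E →ₗᵢ[𝕜] F) (hg : ∀ n v, g (n + 1) (S v) = g n v) (n : ℕ) (v : E) :
    liftₗᵢ g hg (of _ n v) = g n v :=
  lift_of _ hg n v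

variable (S) in
def completionShift :
    Completion (IterateLimit S.toLinearMap) ≃ₗᵢ[𝕜] Completion (IterateLimit S.toLinearMap) :=
  (shift _).extendOfIsometry Completion.toComplₗᵢ.toLinearMap Completion.toComplₗᵢ.toLinearMap
    Completion.denseRange_coe Completion.denseRange_coe fun x ↦ by simp [norm_shift]

theorem completionShift_coe (x : IterateLimit S.toLinearMap) :
    completionShift S x = ↑(shift _ x) :=
  LinearEquiv.extendOfIsometry_eq _ _ _ _ _ _ x

theorem completionShift_symm_coe (x : IterateLimit S.toLinearMap) :
    (completionShift S).symm x = ↑((shift _).symm x) :=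
  LinearEquiv.extendOfIsometry_symm_eq _ _ _ _ _ _ x

end Module.End.IterateLimit

namespace UnitaryDilation

open Module.End IterateLimit

variable {H : Type} [NormedAddCommGroup H] [InnerProductSpace ℂ H] [CompleteSpace H]

open UniformSpace in
def canonical (S : H →ₗᵢ[ℂ] H) : UnitaryDilation H S where
  carrier := Completion (IterateLimit S.toLinearMap)
  J := Completion.toComplₗᵢ.comp (ofₗᵢ S 0)
  Shat := completionShift S
  restricts v := by
    show completionShift S (of S.toLinearMap 0 v : Completion _)
      = (of S.toLinearMap 0 (S v) : Completion _)
    rw [completionShift_coe, shift_of, LinearIsometry.coe_toLinearMap]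
  minimal := Completion.denseRange_coe.mono <| by
    rintro _ ⟨x, rfl⟩
    refine x.induction_on fun n v ↦ Set.mem_iUnion.mpr ⟨n, of S.toLinearMap 0 v, ⟨v, rfl⟩, ?_⟩
    have h : Function.Semiconj ((↑) : _ → Completion _) (shift S.toLinearMap).symm
        (completionShift S).symm := fun x ↦ (completionShift_symm_coe x).symm
    rw [← h.iterate_right n, shift_symm_iterate_of, zero_add]

variable {S : H →ₗᵢ[ℂ] H}

section

variable (D : UnitaryDilation H S)

def embed : IterateLimit S.toLinearMap →ₗᵢ[ℂ] D.carrier :=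
  liftₗᵢ (fun n ↦ (D.Shat⁻¹ ^ n).toLinearIsometry.comp D.J) fun n v ↦ by
    show (D.Shat⁻¹ ^ (n + 1)) (D.J (S v)) = (D.Shat⁻¹ ^ n) (D.J v)
    rw [← D.restricts, pow_succ]
    exact congrArg (D.Shat⁻¹ ^ n) (D.Shat.symm_apply_apply _)

theorem embed_of (n : ℕ) (v : H) : D.embed (of _ n v) = (D.Shat⁻¹ ^ n) (D.J v) :=
  liftₗᵢ_of _ _ n v

theorem embed_of_zero (v : H) : D.embed (of _ 0 v) = D.J v := by
  rw [embed_of, pow_zero, LinearIsometryEquiv.coe_one, id]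

theorem embed_shift (x : IterateLimit S.toLinearMap) :
    D.embed (shift _ x) = D.Shat (D.embed x) :=
  x.induction_on fun n v ↦ by
    rw [shift_of, embed_of, embed_of, LinearIsometry.coe_toLinearMap, ← D.restricts]
    exact DFunLike.congr_fun ((Commute.refl D.Shat).inv_left.pow_left n).eq (D.J v)

theorem denseRange_embed : DenseRange D.embed :=
  D.minimal.mono <| Set.iUnion_subset fun n ↦ by
    rintro _ ⟨_, ⟨v, rfl⟩, rfl⟩
    exact ⟨of _ n v, by rw [embed_of, LinearIsometryEquiv.coe_pow, LinearIsometryEquiv.coe_inv]⟩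

end

def equiv (D₁ D₂ : UnitaryDilation H S) : D₁.carrier ≃ₗᵢ[ℂ] D₂.carrier :=
  (LinearEquiv.refl ℂ _).extendOfIsometry D₁.embed.toLinearMap D₂.embed.toLinearMap
    D₁.denseRange_embed D₂.denseRange_embed fun x ↦ by simp

variable (D₁ D₂ : UnitaryDilation H S)

theorem equiv_embed (x : IterateLimit S.toLinearMap) : equiv D₁ D₂ (D₁.embed x) = D₂.embed x :=
  LinearEquiv.extendOfIsometry_eq _ _ _ _ _ _ x

theorem equiv_J (v : H) : equiv D₁ D₂ (D₁.J v) = D₂.J v := by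
  rw [← embed_of_zero, equiv_embed, embed_of_zero]

theorem equiv_Shat (w : D₁.carrier) : equiv D₁ D₂ (D₁.Shat w) = D₂.Shat (equiv D₁ D₂ w) := by
  refine congrFun (D₁.denseRange_embed.equalizer
    ((equiv D₁ D₂).continuous.comp D₁.Shat.continuous)
    (D₂.Shat.continuous.comp (equiv D₁ D₂).continuous) (funext fun x ↦ ?_)) w
  simp only [Function.comp_apply, ← embed_shift, equiv_embed]

end UnitaryDilation

end

/-- Theorem 4.6 (i): every isometry `S` on a Hilbert space `H` has a minimal unitary dilation
`(Ĥ, Ŝ)`, with `Ŝ|_H = S` and `⋃_{n ≥ 0} Ŝ⁻ⁿ(H)` dense in `Ĥ`; it is unique up to an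
intertwining unitary isomorphism fixing `H`. -/
theorem exists_unique_minimal_unitary_dilation
    (H : Type) [NormedAddCommGroup H] [InnerProductSpace ℂ H] [CompleteSpace H]
    (S : H →ₗᵢ[ℂ] H) :
    Nonempty (UnitaryDilation H S) ∧
      ∀ D₁ D₂ : UnitaryDilation H S,
        ∃ W : D₁.carrier ≃ₗᵢ[ℂ] D₂.carrier,
          (∀ v : H, W (D₁.J v) = D₂.J v) ∧
          ∀ w : D₁.carrier, W (D₁.Shat w) = D₂.Shat (W w) :=
  ⟨⟨.canonical S⟩, fun D₁ D₂ ↦ ⟨UnitaryDilation.equiv D₁ D₂, D₁.equiv_J D₂, D₁.equiv_Shat D₂⟩⟩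
end

section
/- Let X be a measurable space and r : X → X an N-to-1 onto map with measurable inverse branches τ₁,…,τ_N : X → X (so r(τ_k(x)) = x for all x, the sets τ_k(X) are disjoint, and they cover X). Let W, h : X → [0,∞) be measurable functions satisfying Σ_{k=1}^N W(τ_k(x)) h(τ_k(x)) = h(x) for all x ∈ X. Then for every x ∈ X there exists a positive Borel measure P_x on Ω := ∏_{ℕ}{1,…,N} such that for every n and every bounded measurable function f on Ω depending only on the first n coordinates ω₁,…,ω_n, one has ∫_Ω f dP_x = Σ_{ω₁,…,ω_n ∈ {1,…,N}} W^{(n)}(τ_{ω_n}τ_{ω_{n-1}}⋯τ_{ω_1}(x)) · h(τ_{ω_n}τ_{ω_{n-1}}⋯τ_{ω_1}(x)) · f(ω₁,…,ω_n). -/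
/-!
The weights `w n σ = W⁽ⁿ⁾(y) h(y)` at `y = τ_{σ(n-1)} ⋯ τ_{σ 0} x` are nonnegative and
consistent: since `r ∘ τ_k = id`, the weights of the `N` one-step extensions of `σ` add up to
`w n σ` by `Σ_k W(τ_k y) h(τ_k y) = h(y)`. A consistent family is realised by nested intervals:
cut `[0, w 0)` into consecutive intervals of lengths `w 1 k`, cut each of those likewise according
to its extensions, and so on. Sending a point `t` to the sequence of labels of the intervals
containing it pushes Lebesgue measure on `[0, w 0)` forward to a measure on `ℕ → Fin N` whose
cylinder masses are the interval lengths.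
-/

open MeasureTheory

/-- `chainF τ σ x = τ_{σ(n-1)} (τ_{σ(n-2)} ( ⋯ (τ_{σ 0} x)))`, i.e. the composite inverse
branch `τ_{ω_n} τ_{ω_{n-1}} ⋯ τ_{ω_1}` applied to `x` (with `ω_k = σ (k-1)`). -/
def chainF {X : Type} {N n : ℕ} (τ : Fin N → X → X) (σ : Fin n → Fin N) (x : X) : X :=
  (List.ofFn σ).foldl (fun y k => τ k y) x

open Set

theorem exists_le_lt_succ_of_le_of_lt {α : Type*} [LinearOrder α] (S : ℕ → α) {t : α} {m : ℕ}
    (h0 : S 0 ≤ t) (hm : t < S m) : ∃ k < m, S k ≤ t ∧ t < S (k + 1) := by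
  induction m with
  | zero => exact absurd hm h0.not_gt
  | succ m ih =>
    by_cases ht : t < S m
    · obtain ⟨k, hk, hSk⟩ := ih ht
      exact ⟨k, by omega, hSk⟩
    · exact ⟨m, by omega, not_lt.1 ht, hm⟩

theorem Monotone.eq_of_le_lt_succ {α : Type*} [LinearOrder α] {S : ℕ → α} (hS : Monotone S)
    {t : α} {k l : ℕ} (hk : S k ≤ t) (hk' : t < S (k + 1)) (hl : S l ≤ t) (hl' : t < S (l + 1)) :
    k = l := by
  by_contra hne
  rcases Nat.lt_or_gt_of_ne hne with hkl | hlk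
  · exact (hk'.trans_le (hS hkl)).not_ge hl
  · exact (hl'.trans_le (hS hlk)).not_ge hk

section

variable {N : ℕ}

structure IsConsistentCylinderWeight (w : ∀ n, (Fin n → Fin N) → ℝ) : Prop where
  nonneg : ∀ n σ, 0 ≤ w n σ
  sum_snoc : ∀ n σ, ∑ k : Fin N, w (n + 1) (Fin.snoc σ k) = w n σ

namespace CylinderWeight

variable {w : ∀ n, (Fin n → Fin N) → ℝ}

noncomputable def childWeight (w : ∀ n, (Fin n → Fin N) → ℝ) {n : ℕ} (σ : Fin n → Fin N)
    (j : ℕ) : ℝ :=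
  if hj : j < N then w (n + 1) (Fin.snoc σ ⟨j, hj⟩) else 0

noncomputable def childOffset (w : ∀ n, (Fin n → Fin N) → ℝ) {n : ℕ} (σ : Fin n → Fin N)
    (m : ℕ) : ℝ :=
  ∑ j ∈ Finset.range m, childWeight w σ j

noncomputable def cylinderStart (w : ∀ n, (Fin n → Fin N) → ℝ) : ∀ n, (Fin n → Fin N) → ℝ
  | 0, _ => 0
  | n + 1, σ => cylinderStart w n (Fin.init σ) + childOffset w (Fin.init σ) (σ (Fin.last n))

noncomputable def cylinderInterval (w : ∀ n, (Fin n → Fin N) → ℝ) (n : ℕ) (σ : Fin n → Fin N) :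
    Set ℝ :=
  Ico (cylinderStart w n σ) (cylinderStart w n σ + w n σ)

theorem childOffset_zero {n : ℕ} (σ : Fin n → Fin N) : childOffset w σ 0 = 0 := by
  simp [childOffset]

theorem childOffset_succ {n : ℕ} (σ : Fin n → Fin N) (k : Fin N) :
    childOffset w σ (k + 1) = childOffset w σ k + w (n + 1) (Fin.snoc σ k) := by
  simp [childOffset, Finset.sum_range_succ, childWeight]

theorem childOffset_card {n : ℕ} (hw : IsConsistentCylinderWeight w) (σ : Fin n → Fin N) :
    childOffset w σ N = w n σ := by
  rw [childOffset, Finset.sum_range, ← hw.sum_snoc n σ]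
  simp [childWeight]

theorem monotone_childOffset {n : ℕ} (hw : IsConsistentCylinderWeight w) (σ : Fin n → Fin N) :
    Monotone (childOffset w σ) :=
  monotone_nat_of_le_succ fun j => by
    rw [childOffset, childOffset, Finset.sum_range_succ, le_add_iff_nonneg_right, childWeight]
    split_ifs
    exacts [hw.nonneg _ _, le_rfl]

theorem cylinderInterval_snoc {n : ℕ} (σ : Fin n → Fin N) (k : Fin N) :
    cylinderInterval w (n + 1) (Fin.snoc σ k) =
      Ico (cylinderStart w n σ + childOffset w σ k)
        (cylinderStart w n σ + childOffset w σ (k + 1)) := by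
  rw [cylinderInterval, cylinderStart, childOffset_succ, Fin.init_snoc, Fin.snoc_last, add_assoc]

theorem cylinderInterval_snoc_subset (hw : IsConsistentCylinderWeight w) {n : ℕ}
    (σ : Fin n → Fin N) (k : Fin N) :
    cylinderInterval w (n + 1) (Fin.snoc σ k) ⊆ cylinderInterval w n σ := by
  have hmono := monotone_childOffset hw σ
  rw [cylinderInterval_snoc, cylinderInterval, ← childOffset_card hw σ]
  refine Ico_subset_Ico ?_ ?_
  · simpa [childOffset_zero] using hmono (Nat.zero_le k)
  · simpa using hmono k.isLt

theorem cylinderInterval_subset_zero (hw : IsConsistentCylinderWeight w) {n : ℕ}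
    (σ : Fin n → Fin N) : cylinderInterval w n σ ⊆ cylinderInterval w 0 Fin.elim0 := by
  induction n with
  | zero => rw [Subsingleton.elim σ Fin.elim0]
  | succ n ih =>
    rw [← Fin.snoc_init_self σ]
    exact (cylinderInterval_snoc_subset hw _ _).trans (ih _)

theorem eq_of_mem_cylinderInterval (hw : IsConsistentCylinderWeight w) {n : ℕ}
    {σ σ' : Fin n → Fin N} {t : ℝ} (ht : t ∈ cylinderInterval w n σ)
    (ht' : t ∈ cylinderInterval w n σ') : σ = σ' := by
  induction n with
  | zero => exact Subsingleton.elim σ σ'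
  | succ n ih =>
    rw [← Fin.snoc_init_self σ] at ht ⊢
    rw [← Fin.snoc_init_self σ'] at ht' ⊢
    have hinit : Fin.init σ = Fin.init σ' :=
      ih (cylinderInterval_snoc_subset hw _ _ ht) (cylinderInterval_snoc_subset hw _ _ ht')
    rw [hinit] at ht ⊢
    rw [cylinderInterval_snoc, mem_Ico] at ht ht'
    have hlast := (monotone_childOffset hw (Fin.init σ')).eq_of_le_lt_succ
      (le_sub_iff_add_le'.2 ht.1) (sub_lt_iff_lt_add'.2 ht.2)
      (le_sub_iff_add_le'.2 ht'.1) (sub_lt_iff_lt_add'.2 ht'.2)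
    rw [Fin.val_injective hlast]

theorem exists_mem_cylinderInterval (hw : IsConsistentCylinderWeight w) (n : ℕ) {t : ℝ}
    (ht : t ∈ cylinderInterval w 0 Fin.elim0) :
    ∃ σ : Fin n → Fin N, t ∈ cylinderInterval w n σ := by
  induction n with
  | zero => exact ⟨Fin.elim0, ht⟩
  | succ n ih =>
    obtain ⟨σ, hσ⟩ := ih
    rw [cylinderInterval, ← childOffset_card hw σ, mem_Ico] at hσ
    obtain ⟨k, hk, hlo, hhi⟩ :=
      exists_le_lt_succ_of_le_of_lt (fun m => cylinderStart w n σ + childOffset w σ m)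
        (by simpa [childOffset_zero] using hσ.1) hσ.2
    exact ⟨Fin.snoc σ ⟨k, hk⟩, by rw [cylinderInterval_snoc]; exact ⟨hlo, hhi⟩⟩

theorem volume_cylinderInterval (n : ℕ) (σ : Fin n → Fin N) :
    volume (cylinderInterval w n σ) = ENNReal.ofReal (w n σ) := by
  rw [cylinderInterval, Real.volume_Ico, add_sub_cancel_left]

theorem measurableSet_cylinderInterval (n : ℕ) (σ : Fin n → Fin N) :
    MeasurableSet (cylinderInterval w n σ) :=
  measurableSet_Ico

section Digits

variable [NeZero N]

open Classical in
/-- The label of the level-`n` interval containing `t`; junk (`0`) outside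
`cylinderInterval w 0 Fin.elim0`. -/
noncomputable def address (w : ∀ n, (Fin n → Fin N) → ℝ) (n : ℕ) (t : ℝ) : Fin n → Fin N :=
  if H : ∃ σ, t ∈ cylinderInterval w n σ then H.choose else 0

noncomputable def digits (w : ∀ n, (Fin n → Fin N) → ℝ) (t : ℝ) : ℕ → Fin N :=
  fun m => address w (m + 1) t (Fin.last m)

theorem address_eq_of_mem (hw : IsConsistentCylinderWeight w) {n : ℕ} {σ : Fin n → Fin N}
    {t : ℝ} (ht : t ∈ cylinderInterval w n σ) : address w n t = σ := by
  have H : ∃ σ, t ∈ cylinderInterval w n σ := ⟨σ, ht⟩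
  rw [address, dif_pos H]
  exact eq_of_mem_cylinderInterval hw H.choose_spec ht

theorem measurable_address (hw : IsConsistentCylinderWeight w) (n : ℕ) :
    Measurable (address w n) := by
  refine measurable_to_countable' fun σ => ?_
  have hfiber : address w n ⁻¹' {σ} =
      cylinderInterval w n σ ∪ ((⋃ σ', cylinderInterval w n σ')ᶜ ∩ {_t | 0 = σ}) := by
    ext t
    by_cases H : ∃ σ', t ∈ cylinderInterval w n σ'
    · obtain ⟨σ', hσ'⟩ := H
      simp only [mem_preimage, address_eq_of_mem hw hσ', mem_singleton_iff, eq_comm, mem_union,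
        mem_compl_iff, mem_iUnion, mem_inter_iff, mem_ofPred_eq, not_exists]
      exact ⟨fun h => Or.inl (h ▸ hσ'),
        fun h => h.elim (eq_of_mem_cylinderInterval hw · hσ') fun h => absurd hσ' (h.1 σ')⟩
    · simp only [not_exists] at H
      simp [address, H]
  rw [hfiber]
  exact (measurableSet_cylinderInterval n σ).union
    ((MeasurableSet.iUnion fun σ' => measurableSet_cylinderInterval n σ').compl.inter
      (MeasurableSet.const _))

theorem init_address (hw : IsConsistentCylinderWeight w) {n : ℕ} {t : ℝ}
    (ht : t ∈ cylinderInterval w 0 Fin.elim0) :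
    Fin.init (address w (n + 1) t) = address w n t := by
  obtain ⟨σ, hσ⟩ := exists_mem_cylinderInterval hw (n + 1) ht
  rw [← Fin.snoc_init_self σ] at hσ
  rw [address_eq_of_mem hw hσ, Fin.init_snoc,
    address_eq_of_mem hw (cylinderInterval_snoc_subset hw _ _ hσ)]

theorem restrict_digits_eq_address (hw : IsConsistentCylinderWeight w) {t : ℝ}
    (ht : t ∈ cylinderInterval w 0 Fin.elim0) (n : ℕ) :
    (fun i : Fin n => digits w t i) = address w n t := by
  induction n with
  | zero => exact Subsingleton.elim _ _
  | succ n ih =>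
    funext i
    induction i using Fin.lastCases with
    | last => rfl
    | cast j => exact (congrFun ih j).trans (congrFun (init_address hw ht) j).symm

theorem measurable_digits (hw : IsConsistentCylinderWeight w) : Measurable (digits w) :=
  measurable_pi_lambda _ fun m => (measurable_pi_apply _).comp (measurable_address hw (m + 1))

theorem map_address_singleton (hw : IsConsistentCylinderWeight w) {n : ℕ} (σ : Fin n → Fin N) :
    (volume.restrict (cylinderInterval w 0 Fin.elim0)).map (address w n) {σ} =
      ENNReal.ofReal (w n σ) := by
  rw [Measure.map_apply (measurable_address hw n) (measurableSet_singleton σ),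
    Measure.restrict_apply' (measurableSet_cylinderInterval 0 _), ← volume_cylinderInterval]
  congr 1
  ext t
  refine ⟨fun ⟨hσ, ht⟩ => ?_,
    fun ht => ⟨address_eq_of_mem hw ht, cylinderInterval_subset_zero hw σ ht⟩⟩
  obtain ⟨σ', hσ'⟩ := exists_mem_cylinderInterval hw n ht
  rwa [← hσ, address_eq_of_mem hw hσ']

theorem map_digits_restrict (hw : IsConsistentCylinderWeight w) (n : ℕ) :
    ((volume.restrict (cylinderInterval w 0 Fin.elim0)).map (digits w)).map
      (fun ω (i : Fin n) => ω i) =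
      (volume.restrict (cylinderInterval w 0 Fin.elim0)).map (address w n) := by
  rw [Measure.map_map (by fun_prop) (measurable_digits hw)]
  refine Measure.map_congr ?_
  filter_upwards [ae_restrict_mem (measurableSet_cylinderInterval 0 _)] with t ht
  exact restrict_digits_eq_address hw ht n

end Digits

end CylinderWeight

open CylinderWeight in
theorem IsConsistentCylinderWeight.exists_measure_integral_eq_sum
    {w : ∀ n, (Fin n → Fin N) → ℝ} (hw : IsConsistentCylinderWeight w) :
    ∃ P : Measure (ℕ → Fin N), ∀ (n : ℕ) (F : (Fin n → Fin N) → ℝ),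
      ∫ ω, F (fun i => ω i) ∂P = ∑ σ, w n σ * F σ := by
  rcases eq_zero_or_neZero N with rfl | _
  · have hzero : ∀ n σ, w n σ = 0 := fun n σ => by simp [← hw.sum_snoc n σ]
    exact ⟨0, fun n F => by simp [hzero]⟩
  let μ := volume.restrict (cylinderInterval w 0 Fin.elim0)
  have : IsFiniteMeasure μ := isFiniteMeasure_restrict.2 (by simp [volume_cylinderInterval])
  refine ⟨μ.map (digits w), fun n F => ?_⟩
  have hrestrict : Measurable fun (ω : ℕ → Fin N) (i : Fin n) => ω i := by fun_prop
  rw [← integral_map hrestrict.aemeasurable (measurable_of_countable F).aestronglyMeasurable,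
    map_digits_restrict hw, integral_fintype .of_finite]
  refine Finset.sum_congr rfl fun σ _ => ?_
  rw [measureReal_def, map_address_singleton hw, ENNReal.toReal_ofReal (hw.nonneg n σ), smul_eq_mul]

section PathSpace

variable {X : Type}

theorem chainF_snoc (τ : Fin N → X → X) {n : ℕ} (σ : Fin n → Fin N) (k : Fin N) (x : X) :
    chainF τ (Fin.snoc σ k) x = τ k (chainF τ σ x) := by
  simp only [chainF, List.ofFn_succ', Fin.snoc_castSucc, Fin.snoc_last, List.concat_eq_append,
    List.foldl_append, List.foldl_cons, List.foldl_nil]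

/-- `pathWeight r τ W h x n σ = W⁽ⁿ⁾(y) h(y)` at the point `y = τ_{σ(n-1)} ⋯ τ_{σ 0} x`. -/
noncomputable def pathWeight (r : X → X) (τ : Fin N → X → X) (W h : X → ℝ) (x : X) (n : ℕ)
    (σ : Fin n → Fin N) : ℝ :=
  (∏ k ∈ Finset.range n, W (r^[k] (chainF τ σ x))) * h (chainF τ σ x)

theorem pathWeight_snoc {r : X → X} {τ : Fin N → X → X} (hrτ : ∀ k x, r (τ k x) = x)
    (W h : X → ℝ) (x : X) {n : ℕ} (σ : Fin n → Fin N) (k : Fin N) :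
    pathWeight r τ W h x (n + 1) (Fin.snoc σ k) =
      (∏ j ∈ Finset.range n, W (r^[j] (chainF τ σ x))) *
        (W (τ k (chainF τ σ x)) * h (τ k (chainF τ σ x))) := by
  simp only [pathWeight, chainF_snoc, Finset.prod_range_succ', Function.iterate_succ_apply, hrτ,
    Function.iterate_zero_apply]
  ring

theorem isConsistentCylinderWeight_pathWeight {r : X → X} {τ : Fin N → X → X}
    (hrτ : ∀ k x, r (τ k x) = x) {W h : X → ℝ} (hW : ∀ x, 0 ≤ W x) (hh : ∀ x, 0 ≤ h x)
    (hWh : ∀ x, ∑ k : Fin N, W (τ k x) * h (τ k x) = h x) (x : X) :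
    IsConsistentCylinderWeight (pathWeight r τ W h x) where
  nonneg _ _ := mul_nonneg (Finset.prod_nonneg fun _ _ => hW _) (hh _)
  sum_snoc n σ := by
    simp only [pathWeight_snoc hrτ, ← Finset.mul_sum, hWh]
    rfl

end PathSpace

end

theorem exists_path_space_measure_general
    (N : ℕ) (X : Type)
    (r : X → X) (τ : Fin N → X → X)
    (hrτ : ∀ k x, r (τ k x) = x)
    (W h : X → ℝ)
    (hW : ∀ x, 0 ≤ W x) (hh : ∀ x, 0 ≤ h x)
    (hWh : ∀ x, ∑ k : Fin N, W (τ k x) * h (τ k x) = h x) :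
    ∀ x : X, ∃ P : Measure (ℕ → Fin N),
      ∀ (n : ℕ) (F : (Fin n → Fin N) → ℝ),
        ∫ ω, F (fun i => ω i) ∂P =
          ∑ σ : Fin n → Fin N,
            (∏ k ∈ Finset.range n, W (r^[k] (chainF τ σ x))) * h (chainF τ σ x) * F σ :=
  fun x => (isConsistentCylinderWeight_pathWeight hrτ hW hh hWh x).exists_measure_integral_eq_sum

/-- Proposition 4.29: given an `N`-to-1 map `r` with measurable inverse branches
`τ₁, …, τ_N` and weights `W, h ≥ 0` with `Σ_k W(τ_k x) h(τ_k x) = h(x)`, there is for every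
`x ∈ X` a positive measure `P_x` on `Ω = ∏_ℕ {1,…,N}` such that for every bounded measurable
function depending only on the first `n` coordinates (i.e. of the form `ω ↦ F(ω₁,…,ω_n)`),
`∫ F dP_x = Σ_{ω₁,…,ω_n} W^{(n)}(τ_{ω_n}⋯τ_{ω_1} x) h(τ_{ω_n}⋯τ_{ω_1} x) F(ω₁,…,ω_n)`. -/
theorem exists_path_space_measure
    (N : ℕ) (X : Type) [MeasurableSpace X]
    (r : X → X) (τ : Fin N → X → X)
    (hτmeas : ∀ k, Measurable (τ k))
    (hrτ : ∀ k x, r (τ k x) = x)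
    (hdisj : ∀ k l, k ≠ l → Disjoint (Set.range (τ k)) (Set.range (τ l)))
    (hcover : (⋃ k, Set.range (τ k)) = Set.univ)
    (W h : X → ℝ) (hWmeas : Measurable W) (hhmeas : Measurable h)
    (hW : ∀ x, 0 ≤ W x) (hh : ∀ x, 0 ≤ h x)
    (hWh : ∀ x, ∑ k : Fin N, W (τ k x) * h (τ k x) = h x) :
    ∀ x : X, ∃ P : Measure (ℕ → Fin N),
      ∀ (n : ℕ) (F : (Fin n → Fin N) → ℝ),
        ∫ ω, F (fun i => ω i) ∂P =
          ∑ σ : Fin n → Fin N,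
            (∏ k ∈ Finset.range n, W (r^[k] (chainF τ σ x))) * h (chainF τ σ x) * F σ :=
  exists_path_space_measure_general N X r τ hrτ W h hW hh hWh
end
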